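/- arXiv:2312.12585 — 2 statements merged into one kernel-verified Lean document; each statement's English description precedes it below -/
import Mathlib

section
/- The joint state–action poisoning map (s, a) ↦ (F_S(s), F_A(s)(a)) is injective on S × A: for all s₁, s₂ ∈ S and all actions a₁, a₂ ∈ A, if F_S(s₁) = F_S(s₂) and F_A(s₁)(a₁) = F_A(s₂)(a₂), then s₁ = s₂ and a₁ = a₂. -/
open scoped Classical

/-- The state poisoning map: add the trigger `δ` on targeted states, identity elsewhere. -/
noncomputable def poisonState {G : Type*} [AddGroup G] (Sdag : Set G) (δ : G) (s : G) : G :=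
  if s ∈ Sdag then s + δ else s

/-- The action swap map: on targeted states it transposes the target action `a†` with the
designated optimal action `a*(s)`; elsewhere it is the identity. -/
noncomputable def swapAction {G A : Type*} (Sdag : Set G) (adag : A) (astar : G → A)
    (s : G) (a : A) : A :=
  if s ∈ Sdag then
    (if a = adag then astar s else if a = astar s then adag else a)
  else a

section Poisoning

variable {G A : Type*}

theorem poisonState_injOn [AddGroup G] {S Sdag : Set G} {δ : G}
    (htrig : ∀ s ∈ Sdag, s + δ ∉ S) : Set.InjOn (poisonState Sdag δ) S := by
  intro s₁ hs₁ s₂ hs₂ h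
  unfold poisonState at h
  by_cases h₁ : s₁ ∈ Sdag <;> by_cases h₂ : s₂ ∈ Sdag <;>
    simp only [h₁, h₂, if_true, if_false] at h
  · exact add_right_cancel h
  · exact absurd (h ▸ hs₂) (htrig s₁ h₁)
  · exact absurd (h.symm ▸ hs₁) (htrig s₂ h₂)
  · exact h

theorem swapAction_of_mem {Sdag : Set G} {s : G} (hs : s ∈ Sdag) (adag : A) (astar : G → A) :
    swapAction Sdag adag astar s = Equiv.swap adag (astar s) := by
  funext a
  simp only [swapAction, hs, if_true, Equiv.swap_apply_def]

theorem swapAction_of_notMem {Sdag : Set G} {s : G} (hs : s ∉ Sdag) (adag : A)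
    (astar : G → A) : swapAction Sdag adag astar s = id := by
  funext a
  simp only [swapAction, hs, if_false, id]

theorem swapAction_injective (Sdag : Set G) (adag : A) (astar : G → A) (s : G) :
    Function.Injective (swapAction Sdag adag astar s) := by
  by_cases hs : s ∈ Sdag
  · rw [swapAction_of_mem hs]
    exact (Equiv.swap adag (astar s)).injective
  · rw [swapAction_of_notMem hs]
    exact Function.injective_id

end Poisoning

theorem poison_joint_injOn_general {G A : Type*} [AddGroup G] (S Sdag : Set G) (δ : G)
    (adag : A) (astar : G → A)
    (htrig : ∀ s ∈ Sdag, s + δ ∉ S) :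
    ∀ s₁ ∈ S, ∀ s₂ ∈ S, ∀ a₁ a₂ : A,
      poisonState Sdag δ s₁ = poisonState Sdag δ s₂ →
      swapAction Sdag adag astar s₁ a₁ = swapAction Sdag adag astar s₂ a₂ →
      s₁ = s₂ ∧ a₁ = a₂ := by
  intro s₁ hs₁ s₂ hs₂ a₁ a₂ hstate hact
  obtain rfl : s₁ = s₂ := poisonState_injOn htrig hs₁ hs₂ hstate
  exact ⟨rfl, swapAction_injective Sdag adag astar s₁ hact⟩

/-- The joint state–action poisoning map `(s, a) ↦ (F_S s, F_A s a)` is injective on `S × A`. -/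
theorem poison_joint_injOn {G A : Type*} [AddGroup G] (S Sdag : Set G) (δ : G)
    (adag : A) (astar : G → A)
    (hsub : Sdag ⊆ S) (htrig : ∀ s ∈ Sdag, s + δ ∉ S) :
    ∀ s₁ ∈ S, ∀ s₂ ∈ S, ∀ a₁ a₂ : A,
      poisonState Sdag δ s₁ = poisonState Sdag δ s₂ →
      swapAction Sdag adag astar s₁ a₁ = swapAction Sdag adag astar s₂ a₂ →
      s₁ = s₂ ∧ a₁ = a₂ :=
  poison_joint_injOn_general S Sdag δ adag astar htrig
end

section
/- Assume that for every targeted state s ∈ S† the optimal action set is the singleton π*(s) = {a*(s)}. Then the transferred policy π̃ selects exactly the target action on every poisoned targeted state: for every s ∈ (F_S '' S) \ S, π̃(s) = {a†}. -/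
open scoped Classical

/-- The inverse state map: identity on clean states, subtract the trigger `δ` elsewhere. -/
noncomputable def unpoisonState {G : Type*} [AddGroup G] (S : Set G) (δ : G) (s : G) : G :=
  if s ∈ S then s else s - δ

/-- The transferred policy `π̃ s = { F_A (F_S⁻ s) a : a ∈ π* (F_S⁻ s) }`. -/
noncomputable def transferredPolicy {G A : Type*} [AddGroup G] (S Sdag : Set G) (δ : G)
    (adag : A) (astar : G → A) (piStar : G → Set A) (s : G) : Set A :=
  swapAction Sdag adag astar (unpoisonState S δ s) '' piStar (unpoisonState S δ s)

section Poisoning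

variable {G A : Type*}

theorem poisonState_of_mem [AddGroup G] {Sdag : Set G} {s : G} (δ : G) (hs : s ∈ Sdag) :
    poisonState Sdag δ s = s + δ :=
  if_pos hs

theorem poisonState_of_notMem [AddGroup G] {Sdag : Set G} {s : G} (δ : G) (hs : s ∉ Sdag) :
    poisonState Sdag δ s = s :=
  if_neg hs

theorem unpoisonState_of_notMem [AddGroup G] {S : Set G} {s : G} (δ : G) (hs : s ∉ S) :
    unpoisonState S δ s = s - δ :=
  if_neg hs

theorem unpoisonState_poisonState [AddGroup G] {S Sdag : Set G} {δ s : G} (hs : s ∈ Sdag)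
    (htrig : s + δ ∉ S) : unpoisonState S δ (poisonState Sdag δ s) = s := by
  rw [poisonState_of_mem δ hs, unpoisonState_of_notMem δ htrig, add_sub_cancel_right]

theorem mem_of_poisonState_notMem [AddGroup G] {S Sdag : Set G} {δ s : G} (hs : s ∈ S)
    (hpoison : poisonState Sdag δ s ∉ S) : s ∈ Sdag := by
  by_contra hnot
  exact hpoison (by rwa [poisonState_of_notMem δ hnot])

theorem swapAction_self {Sdag : Set G} {s : G} (adag : A) (astar : G → A) (hs : s ∈ Sdag) :
    swapAction Sdag adag astar s (astar s) = adag := by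
  by_cases h : astar s = adag <;> simp [swapAction, hs, h]

theorem transferredPolicy_poisonState [AddGroup G] {S Sdag : Set G} {δ s : G} (adag : A)
    (astar : G → A) (piStar : G → Set A) (hs : s ∈ Sdag) (htrig : s + δ ∉ S) :
    transferredPolicy S Sdag δ adag astar piStar (poisonState Sdag δ s) =
      swapAction Sdag adag astar s '' piStar s := by
  rw [transferredPolicy, unpoisonState_poisonState hs htrig]

end Poisoning

theorem transferredPolicy_eq_target_general {G A : Type*} [AddGroup G] (S Sdag : Set G) (δ : G)
    (adag : A) (astar : G → A) (piStar : G → Set A)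
    (htrig : ∀ s ∈ Sdag, s + δ ∉ S)
    (hsingle : ∀ s ∈ Sdag, piStar s = {astar s}) :
    ∀ s ∈ (poisonState Sdag δ '' S) \ S,
      transferredPolicy S Sdag δ adag astar piStar s = {adag} := by
  rintro _ ⟨⟨t, htS, rfl⟩, hpoison⟩
  have ht : t ∈ Sdag := mem_of_poisonState_notMem htS hpoison
  rw [transferredPolicy_poisonState adag astar piStar ht (htrig t ht), hsingle t ht,
    Set.image_singleton, swapAction_self adag astar ht]

/-- If the optimal action set on every targeted state is the singleton {a*(s)}, then the
transferred policy selects exactly the target action on every poisoned targeted state. -/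
theorem transferredPolicy_eq_target {G A : Type*} [AddGroup G] (S Sdag : Set G) (δ : G)
    (adag : A) (astar : G → A) (piStar : G → Set A)
    (hsub : Sdag ⊆ S) (htrig : ∀ s ∈ Sdag, s + δ ∉ S)
    (hsingle : ∀ s ∈ Sdag, piStar s = {astar s}) :
    ∀ s ∈ (poisonState Sdag δ '' S) \ S,
      transferredPolicy S Sdag δ adag astar piStar s = {adag} :=
  transferredPolicy_eq_target_general S Sdag δ adag astar piStar htrig hsingle
end
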